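/- arXiv:1207.2958 — 6 statements merged into one kernel-verified Lean document; each statement's English description precedes it below -/
import Mathlib

section
/- Let X be a normed space, x, y ∈ X, δ > 0, u = (x+y)/2 and v = (x−y)/2. Then for 1 ≤ p < ∞ in ℓ_p: there exists N ∈ ℕ such that u + δ^{1/p}‖v‖ B_{E_N} ⊆ Mid(x, y, δ), where E_N is the closed linear span of the basis vectors e_i with i > N. -/
/-!
With `v = (x - y) / 2` and `z = (x + y) / 2 + h`, the distances from `x` and `y` to `z` are
`‖v - h‖` and `‖v + h‖`. If `h` vanishes on a finite set `s` and `b` is the part of `v` outside `s`,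
then `‖v ± h‖ ^ p = ‖v‖ ^ p - ‖b‖ ^ p + ‖b ± h‖ ^ p ≤ ‖v‖ ^ p - ‖b‖ ^ p + (‖b‖ + ‖h‖) ^ p`.
For `‖h‖ ≤ δ ^ (1 / p) * ‖v‖` and `b = 0` this is at most `(1 + δ) * ‖v‖ ^ p`, which is strictly
below `((1 + δ) * ‖v‖) ^ p` when `p > 1` and `v ≠ 0` (Bernoulli), so by continuity the bound
survives a small tail `‖b‖`, and `‖b‖ → 0` as `s` grows. For `p = 1` the bound does not depend
on `‖b‖` at all.
-/

open scoped ENNReal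

/-- The approximate metric midpoint set. -/
def Mid {X : Type*} [MetricSpace X] (x y : X) (δ : ℝ) : Set X :=
  {z : X | max (dist x z) (dist y z) ≤ (1 + δ) * dist x y / 2}

open Filter Topology

theorem inv_two_smul_add_add_mem_Mid_iff {X : Type*} [NormedAddCommGroup X] [NormedSpace ℝ X]
    (x y h : X) (δ : ℝ) :
    (2 : ℝ)⁻¹ • (x + y) + h ∈ Mid x y δ ↔
      max ‖(2 : ℝ)⁻¹ • (x - y) - h‖ ‖(2 : ℝ)⁻¹ • (x - y) + h‖ ≤
        (1 + δ) * ‖(2 : ℝ)⁻¹ • (x - y)‖ := by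
  have hx : x - ((2 : ℝ)⁻¹ • (x + y) + h) = (2 : ℝ)⁻¹ • (x - y) - h := by module
  have hy : y - ((2 : ℝ)⁻¹ • (x + y) + h) = -((2 : ℝ)⁻¹ • (x - y) + h) := by module
  have hxy : ‖x - y‖ = 2 * ‖(2 : ℝ)⁻¹ • (x - y)‖ := by simp [norm_smul]
  simp only [Mid, Set.mem_ofPred_eq, dist_eq_norm, hx, hy, norm_neg, hxy]
  ring_nf

theorem eventually_add_rpow_sub_rpow_le {ι : Type*} {l : Filter ι} {s : ι → ℝ}
    (hs : Tendsto s l (𝓝 0)) {q δ V : ℝ} (hq : 1 ≤ q) (hδ : 0 < δ) (hV : 0 ≤ V) :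
    ∀ᶠ i in l, (s i + δ ^ (1 / q) * V) ^ q - s i ^ q ≤ ((1 + δ) ^ q - 1) * V ^ q := by
  rcases hq.eq_or_lt with rfl | hq
  · exact Eventually.of_forall fun i => by simp
  rcases hV.eq_or_lt with rfl | hV
  · exact Eventually.of_forall fun i => by simp [Real.zero_rpow (by positivity : q ≠ 0)]
  set c := δ ^ (1 / q) * V
  have hcq : c ^ q = δ * V ^ q := by
    rw [Real.mul_rpow (by positivity) hV.le, ← Real.rpow_mul hδ.le,
      one_div_mul_cancel (by positivity), Real.rpow_one]
  have hlt : c ^ q < ((1 + δ) ^ q - 1) * V ^ q := by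
    have : 1 + δ < (1 + δ) ^ q := by
      simpa using Real.rpow_lt_rpow_of_exponent_lt (by linarith : 1 < 1 + δ) hq
    rw [hcq]
    nlinarith [Real.rpow_pos_of_pos hV q]
  have hcont : Continuous fun t : ℝ => (t + c) ^ q - t ^ q := by
    have := Real.continuous_rpow_const (by positivity : 0 ≤ q)
    fun_prop
  have hlim : Tendsto (fun i => (s i + c) ^ q - s i ^ q) l (𝓝 (c ^ q)) := by
    simpa [Function.comp_def, Real.zero_rpow (by positivity : q ≠ 0)] using
      (hcont.tendsto 0).comp hs
  exact (hlim.eventually_lt_const hlt).mono fun _ => le_of_lt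

namespace lp

variable {α : Type*} {E : α → Type*} [∀ i, NormedAddCommGroup (E i)] [DecidableEq α] {p : ℝ≥0∞}

theorem norm_add_rpow_eq (hp : 0 < p.toReal) (f g : lp E p) {s : Finset α}
    (hg : ∀ i ∈ s, g i = 0) :
    ‖f + g‖ ^ p.toReal = ‖f‖ ^ p.toReal - ‖f - ∑ i ∈ s, lp.single p i (f i)‖ ^ p.toReal +
      ‖f - ∑ i ∈ s, lp.single p i (f i) + g‖ ^ p.toReal := by
  have hfg : ∀ i ∈ s, (f + g) i = f i := fun i hi => by simp [hg i hi]
  have h₁ := lp.norm_compl_sum_single hp (f + g) s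
  have h₂ := lp.norm_compl_sum_single hp f s
  rw [Finset.sum_congr rfl fun i hi => congrArg (lp.single p i) (hfg i hi),
    Finset.sum_congr rfl fun i hi => congrArg (‖·‖ ^ p.toReal) (hfg i hi), add_sub_right_comm] at h₁
  linarith

theorem exists_finset_norm_add_le [Fact (1 ≤ p)] (hp : p ≠ ∞) (f : lp E p) {δ : ℝ} (hδ : 0 < δ) :
    ∃ s : Finset α, ∀ g : lp E p, ‖g‖ ≤ δ ^ (1 / p.toReal) * ‖f‖ → (∀ i ∈ s, g i = 0) →
      ‖f + g‖ ≤ (1 + δ) * ‖f‖ := by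
  set q := p.toReal
  have hq : 1 ≤ q := by
    simpa using ENNReal.toReal_mono hp (Fact.out : 1 ≤ p)
  have htail : Tendsto (fun s : Finset α => ‖f - ∑ i ∈ s, lp.single p i (f i)‖) atTop (𝓝 0) := by
    simpa [norm_sub_rev] using tendsto_iff_norm_sub_tendsto_zero.1 (lp.hasSum_single hp f)
  obtain ⟨s, hs⟩ := (eventually_add_rpow_sub_rpow_le htail hq hδ (norm_nonneg f)).exists
  refine ⟨s, fun g hg hgs => ?_⟩
  set b := f - ∑ i ∈ s, lp.single p i (f i)
  have hq₀ : 0 < q := by linarith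
  rw [← Real.rpow_le_rpow_iff (norm_nonneg _) (by positivity) hq₀]
  calc ‖f + g‖ ^ q = ‖f‖ ^ q - ‖b‖ ^ q + ‖b + g‖ ^ q := norm_add_rpow_eq hq₀ f g hgs
    _ ≤ ‖f‖ ^ q - ‖b‖ ^ q + (‖b‖ + δ ^ (1 / q) * ‖f‖) ^ q := by
      gcongr
      exact (norm_add_le b g).trans (by linarith)
    _ ≤ ‖f‖ ^ q + ((1 + δ) ^ q - 1) * ‖f‖ ^ q := by linarith
    _ = ((1 + δ) * ‖f‖) ^ q := by rw [Real.mul_rpow (by linarith) (norm_nonneg f)]; ring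

end lp

/-- In `ℓ_p` (`1 ≤ p < ∞`), with `u = (x+y)/2` and `v = (x-y)/2`, there is `N` such
that `u + δ^{1/p} ‖v‖ B_{E_N} ⊆ Mid (x, y, δ)`, where `E_N` is the closed span of the
basis vectors `e_i` with `i > N`, i.e. `B_{E_N}` consists of elements of the unit ball
vanishing on coordinates `≤ N`. -/
theorem midpoints_lower_estimate_lp (p : ℝ≥0∞) [Fact (1 ≤ p)] (hp : p ≠ ∞)
    (x y : lp (fun _ : ℕ => ℝ) p) (δ : ℝ) (hδ : 0 < δ) :
    ∃ N : ℕ, ∀ w : lp (fun _ : ℕ => ℝ) p, ‖w‖ ≤ 1 → (∀ i ≤ N, w i = 0) →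
      ((2 : ℝ)⁻¹ • (x + y)) + (δ ^ (1 / p.toReal) * ‖(2 : ℝ)⁻¹ • (x - y)‖) • w
        ∈ Mid x y δ := by
  obtain ⟨s, hs⟩ := lp.exists_finset_norm_add_le hp ((2 : ℝ)⁻¹ • (x - y)) hδ
  refine ⟨s.sup id, fun w hw hwN => ?_⟩
  set c := δ ^ (1 / p.toReal) * ‖(2 : ℝ)⁻¹ • (x - y)‖
  have hcw : ‖c • w‖ ≤ c := by
    rw [norm_smul, Real.norm_of_nonneg (by positivity)]
    exact mul_le_of_le_one_right (by positivity) hw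
  have hcws : ∀ i ∈ s, (c • w) i = 0 := fun i hi => by
    simp [hwN i (Finset.le_sup (f := id) hi)]
  rw [inv_two_smul_add_add_mem_Mid_iff, sub_eq_add_neg]
  exact max_le (hs _ (by rwa [norm_neg]) fun i hi => by
    rw [lp.coeFn_neg, Pi.neg_apply, hcws i hi, neg_zero]) (hs _ hcw hcws)
end

section
/- In ℓ_p (1 ≤ p < ∞), for any x, y and 0 < δ < 1, there is a compact subset K of ℓ_p such that Mid(x, y, δ) ⊆ K + 2 δ^{1/p} ‖v‖ B_{ℓ_p}, where v = (x−y)/2. -/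
open scoped ENNReal Pointwise

/-!
Put `v = (x - y) / 2` and write `z = (x + y) / 2 + u`. Membership of `z` in `Mid x y δ` says
`‖v ± u‖ ≤ (1 + δ) ‖v‖`, and convexity of `t ↦ t ^ p` gives, coordinatewise,
`max (|vᵢ|, |uᵢ|) ^ p ≤ (|vᵢ + uᵢ| ^ p + |vᵢ - uᵢ| ^ p) / 2`. Fix a finite set `F` of coordinates
carrying all but a `δ`-fraction of `‖v‖ ^ p`. Summing the coordinatewise bound (with `|vᵢ|` on `F`
and `|uᵢ|` off `F`) gives `∑_{i ∉ F} |uᵢ| ^ p ≤ ((1 + δ) ^ p - (1 - δ)) ‖v‖ ^ p ≤ 2 ^ p δ ‖v‖ ^ p`.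
So `z` lies within `2 δ ^ (1/p) ‖v‖` of `(x + y) / 2` plus the truncation of `u` to `F`, and these
truncations form a bounded subset of a finite-dimensional space.
-/

lemma abs_rpow_le_half_add_abs_rpow {q : ℝ} (hq : 1 ≤ q) (a b : ℝ) :
    |a| ^ q ≤ (|a + b| ^ q + |a - b| ^ q) / 2 := by
  have ha : |a| ≤ (|a + b| + |a - b|) / 2 := by
    have := abs_add_le (a + b) (a - b)
    rw [show a + b + (a - b) = 2 * a by ring, abs_mul, abs_two] at this
    linarith
  have hconv := (convexOn_rpow hq).2 (Set.mem_Ici.2 (abs_nonneg (a + b)))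
    (Set.mem_Ici.2 (abs_nonneg (a - b))) (by norm_num : (0 : ℝ) ≤ 1 / 2)
    (by norm_num : (0 : ℝ) ≤ 1 / 2) (by norm_num)
  simp only [smul_eq_mul] at hconv
  calc |a| ^ q ≤ ((|a + b| + |a - b|) / 2) ^ q :=
        Real.rpow_le_rpow (abs_nonneg a) ha (by linarith)
    _ = (1 / 2 * |a + b| + 1 / 2 * |a - b|) ^ q := by ring_nf
    _ ≤ 1 / 2 * |a + b| ^ q + 1 / 2 * |a - b| ^ q := hconv
    _ = (|a + b| ^ q + |a - b| ^ q) / 2 := by ring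

lemma one_add_rpow_le_one_add_mul {q δ : ℝ} (hq : 1 ≤ q) (hδ₀ : 0 ≤ δ) (hδ₁ : δ ≤ 1) :
    (1 + δ) ^ q ≤ 1 + (2 ^ q - 1) * δ := by
  have hconv := (convexOn_rpow hq).2 (Set.mem_Ici.2 zero_le_one)
    (Set.mem_Ici.2 zero_le_two) (sub_nonneg.2 hδ₁) hδ₀ (sub_add_cancel 1 δ)
  simp only [smul_eq_mul, Real.one_rpow] at hconv
  calc (1 + δ) ^ q = ((1 - δ) * 1 + δ * 2) ^ q := by ring_nf
    _ ≤ (1 - δ) * 1 + δ * 2 ^ q := hconv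
    _ = 1 + (2 ^ q - 1) * δ := by ring

lemma le_two_mul_rpow_inv_mul_of_rpow_add_le {q δ a c : ℝ} (hq : 1 ≤ q) (hδ₀ : 0 ≤ δ)
    (hδ₁ : δ ≤ 1) (ha : 0 ≤ a) (hc : 0 ≤ c)
    (h : a ^ q + (1 - δ) * c ^ q ≤ ((1 + δ) * c) ^ q) :
    a ≤ 2 * δ ^ (1 / q) * c := by
  have hq₀ : 0 < q := zero_lt_one.trans_le hq
  have hrhs : (2 * δ ^ (1 / q) * c) ^ q = 2 ^ q * δ * c ^ q := by
    rw [Real.mul_rpow (by positivity) hc, Real.mul_rpow zero_le_two (by positivity),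
      ← Real.rpow_mul hδ₀, one_div_mul_cancel hq₀.ne', Real.rpow_one]
  have hcq : 0 ≤ c ^ q := Real.rpow_nonneg hc q
  rw [← Real.rpow_le_rpow_iff ha (by positivity) hq₀, hrhs]
  rw [Real.mul_rpow (by linarith) hc] at h
  nlinarith [mul_le_mul_of_nonneg_right (one_add_rpow_le_one_add_mul hq hδ₀ hδ₁) hcq]

lemma HasSum.exists_finset_one_sub_mul_le_sum {α : Type*} {f : α → ℝ} {s δ : ℝ}
    (hf : HasSum f s) (hs : 0 ≤ s) (hδ : 0 < δ) : ∃ F : Finset α, (1 - δ) * s ≤ ∑ i ∈ F, f i := by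
  rcases hs.eq_or_lt with rfl | hs
  · exact ⟨∅, by simp⟩
  · obtain ⟨F, hF⟩ := (hf.eventually (eventually_gt_nhds (by nlinarith : (1 - δ) * s < s))).exists
    exact ⟨F, hF.le⟩

lemma norm_sub_le_of_mem_Mid {E : Type*} [NormedAddCommGroup E] [NormedSpace ℝ E]
    {x y z : E} {δ : ℝ} (hz : z ∈ Mid x y δ) :
    ‖x - z‖ ≤ (1 + δ) * ‖(2 : ℝ)⁻¹ • (x - y)‖ ∧ ‖z - y‖ ≤ (1 + δ) * ‖(2 : ℝ)⁻¹ • (x - y)‖ := by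
  have hv : ‖(2 : ℝ)⁻¹ • (x - y)‖ = dist x y / 2 := by
    rw [norm_smul, dist_eq_norm]; norm_num; ring
  have hz : max (dist x z) (dist y z) ≤ (1 + δ) * dist x y / 2 := hz
  rw [hv, ← dist_eq_norm, ← dist_eq_norm, dist_comm z]
  exact ⟨by linarith [(max_le_iff.1 hz).1], by linarith [(max_le_iff.1 hz).2]⟩

namespace lp

variable {α : Type*} [DecidableEq α] {p : ℝ≥0∞}

theorem norm_sub_sum_single_rpow_add_sum_le (hp : 1 ≤ p.toReal) (u v : lp (fun _ : α => ℝ) p)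
    (F : Finset α) :
    ‖u - ∑ i ∈ F, lp.single p i (u i)‖ ^ p.toReal + ∑ i ∈ F, ‖v i‖ ^ p.toReal ≤
      (‖v + u‖ ^ p.toReal + ‖v - u‖ ^ p.toReal) / 2 := by
  set q := p.toReal
  have hq₀ : 0 < q := zero_lt_one.trans_le hp
  have hlhs : HasSum (fun i => ‖u i‖ ^ q + if i ∈ F then ‖v i‖ ^ q - ‖u i‖ ^ q else 0)
      (‖u - ∑ i ∈ F, lp.single p i (u i)‖ ^ q + ∑ i ∈ F, ‖v i‖ ^ q) := by
    have hfin : HasSum (fun i => if i ∈ F then ‖v i‖ ^ q - ‖u i‖ ^ q else 0)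
        (∑ i ∈ F, if i ∈ F then ‖v i‖ ^ q - ‖u i‖ ^ q else 0) :=
      hasSum_sum_of_ne_finset_zero fun _ hi => if_neg hi
    convert (lp.hasSum_norm hq₀ u).add hfin using 1
    rw [lp.norm_compl_sum_single hq₀, Finset.sum_ite_of_true (fun _ h => h),
      Finset.sum_sub_distrib]
    ring
  have hrhs : HasSum (fun i => (‖(v + u) i‖ ^ q + ‖(v - u) i‖ ^ q) / 2)
      ((‖v + u‖ ^ q + ‖v - u‖ ^ q) / 2) :=
    ((lp.hasSum_norm hq₀ _).add (lp.hasSum_norm hq₀ _)).div_const 2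
  refine hasSum_le (fun i => ?_) hlhs hrhs
  simp only [lp.coeFn_add, lp.coeFn_sub, Pi.add_apply, Pi.sub_apply, Real.norm_eq_abs]
  split_ifs
  · simpa using abs_rpow_le_half_add_abs_rpow hp (v i) (u i)
  · simpa [add_comm (u i), abs_sub_comm (u i)] using abs_rpow_le_half_add_abs_rpow hp (u i) (v i)

theorem norm_sub_sum_single_le_of_norm_add_le {δ : ℝ} (hp : 1 ≤ p.toReal) (hδ₀ : 0 ≤ δ)
    (hδ₁ : δ ≤ 1) {u v : lp (fun _ : α => ℝ) p} {F : Finset α}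
    (hadd : ‖v + u‖ ≤ (1 + δ) * ‖v‖) (hsub : ‖v - u‖ ≤ (1 + δ) * ‖v‖)
    (hF : (1 - δ) * ‖v‖ ^ p.toReal ≤ ∑ i ∈ F, ‖v i‖ ^ p.toReal) :
    ‖u - ∑ i ∈ F, lp.single p i (u i)‖ ≤ 2 * δ ^ (1 / p.toReal) * ‖v‖ := by
  refine le_two_mul_rpow_inv_mul_of_rpow_add_le hp hδ₀ hδ₁ (lp.norm_nonneg' _)
    (lp.norm_nonneg' _) ?_
  have hp₀ : 0 ≤ p.toReal := zero_le_one.trans hp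
  have hadd' := Real.rpow_le_rpow (lp.norm_nonneg' _) hadd hp₀
  have hsub' := Real.rpow_le_rpow (lp.norm_nonneg' _) hsub hp₀
  linarith [norm_sub_sum_single_rpow_add_sum_le hp u v F]

theorem exists_isCompact_forall_norm_le_sum_single_mem [Fact (1 ≤ p)] (F : Finset α) (R : ℝ) :
    ∃ K : Set (lp (fun _ : α => ℝ) p), IsCompact K ∧
      ∀ u : lp (fun _ : α => ℝ) p, ‖u‖ ≤ R → ∑ i ∈ F, lp.single p i (u i) ∈ K := by
  refine ⟨(fun c : F → ℝ => ∑ i : F, lp.single p (i : α) (c i)) '' Metric.closedBall 0 R,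
    (isCompact_closedBall _ _).image <| continuous_finsetSum _ fun i _ =>
      (lp.isometry_single (i : α)).continuous.comp' (continuous_apply i), fun u hu => ?_⟩
  refine ⟨fun i => u i, mem_closedBall_zero_iff.2 ?_, by simp⟩
  refine (pi_norm_le_iff_of_nonneg ((norm_nonneg u).trans hu)).2 fun i => ?_
  exact (lp.norm_apply_le_norm (zero_lt_one.trans_le Fact.out).ne' u i).trans hu

end lp

/-- In `ℓ_p` (`1 ≤ p < ∞`), for any `x, y` and `0 < δ < 1`, there is a compact set `K`
with `Mid (x, y, δ) ⊆ K + 2 δ^{1/p} ‖v‖ B_{ℓ_p}`, where `v = (x - y)/2`. -/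
theorem midpoints_upper_estimate_lp (p : ℝ≥0∞) [Fact (1 ≤ p)] (hp : p ≠ ∞)
    (x y : lp (fun _ : ℕ => ℝ) p) (δ : ℝ) (hδ₀ : 0 < δ) (hδ₁ : δ < 1) :
    ∃ K : Set (lp (fun _ : ℕ => ℝ) p), IsCompact K ∧
      Mid x y δ ⊆ K + Metric.closedBall (0 : lp (fun _ : ℕ => ℝ) p) (2 * δ ^ (1 / p.toReal) * ‖(2 : ℝ)⁻¹ • (x - y)‖) := by
  have hq : 1 ≤ p.toReal := by simpa using ENNReal.toReal_mono hp (Fact.out : (1 : ℝ≥0∞) ≤ p)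
  set v := (2 : ℝ)⁻¹ • (x - y)
  set m := x - v
  obtain ⟨F, hF⟩ := (lp.hasSum_norm (zero_lt_one.trans_le hq) v).exists_finset_one_sub_mul_le_sum
    (by positivity) hδ₀
  obtain ⟨K, hK, hKmem⟩ := lp.exists_isCompact_forall_norm_le_sum_single_mem (p := p) F
    (‖v‖ + (1 + δ) * ‖v‖)
  refine ⟨{m} + K, isCompact_singleton.add hK, fun z hz => ?_⟩
  obtain ⟨hxz, hzy⟩ : ‖x - z‖ ≤ (1 + δ) * ‖v‖ ∧ ‖z - y‖ ≤ (1 + δ) * ‖v‖ :=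
    norm_sub_le_of_mem_Mid hz
  set u := z - m
  have hsub : v - u = x - z := by simp only [u, m]; abel
  have hadd : v + u = z - y := by simp only [u, m, v]; module
  have hu : ‖u‖ ≤ ‖v‖ + (1 + δ) * ‖v‖ := (norm_le_insert v u).trans (by rw [hsub]; gcongr)
  refine Set.mem_add.2 ⟨m + _, Set.add_mem_add rfl (hKmem u hu), _,
    mem_closedBall_zero_iff.2 (lp.norm_sub_sum_single_le_of_norm_add_le hq hδ₀.le hδ₁.le
      (hadd ▸ hzy) (hsub ▸ hxz) hF), by simp only [u]; abel⟩
end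

section
/- With the notation of the previous statement, also define V : Y → X by Vy = Σ_i g_i(y) x_i, where (g_i) is a continuous partition of unity subordinate to (B_Y(y_i,λ)). Then with C = (1 + K + 2K²)λ one has ‖VUx − x‖ ≤ C for all x ∈ X and ‖UVy − y‖ ≤ C for all y ∈ Y. -/
/-! If `‖x - x i‖ ≤ s`, every `x j` carrying weight at `x` lies within `s + λ` of `x i`, so the
convex combination `U x` of the matching `y j` lies within `K (s + λ)` of `y i`. Starting from a net
point with `‖x - x i‖ < λ` this gives `‖U x - y i‖ ≤ 2Kλ`, then `‖V (U x) - x i‖ ≤ K (2Kλ + λ)`,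
hence `‖V (U x) - x‖ ≤ (1 + K + 2K²) λ`; the estimate for `U ∘ V` is the same with the nets
swapped. -/

theorem norm_finsum_smul_sub_le {ι E : Type*} [SeminormedAddCommGroup E] [NormedSpace ℝ E]
    {w : ι → ℝ} {z : ι → E} {c : E} {M : ℝ} (hw₀ : ∀ j, 0 ≤ w j) (hw₁ : ∑ᶠ j, w j = 1)
    (hz : ∀ j, w j ≠ 0 → ‖z j - c‖ ≤ M) :
    ‖(∑ᶠ j, w j • z j) - c‖ ≤ M :=
  mem_closedBall_iff_norm.1 <|
    (convex_closedBall c M).finsum_mem hw₀ hw₁ fun j hj => mem_closedBall_iff_norm.2 (hz j hj)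

theorem norm_finsum_smul_sub_le_of_subordinate {ι E F : Type*} [SeminormedAddCommGroup E]
    [SeminormedAddCommGroup F] [NormedSpace ℝ F] {a : ι → E} {b : ι → F} {w : ι → ℝ}
    {e : E} {i : ι} {L r s : ℝ} (hL : 0 ≤ L) (hba : ∀ j, ‖b j - b i‖ ≤ L * ‖a j - a i‖)
    (hw₀ : ∀ j, 0 ≤ w j) (hw₁ : ∑ᶠ j, w j = 1) (hw : ∀ j, w j ≠ 0 → ‖e - a j‖ < r)
    (he : ‖e - a i‖ ≤ s) :
    ‖(∑ᶠ j, w j • b j) - b i‖ ≤ L * (s + r) := by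
  refine norm_finsum_smul_sub_le hw₀ hw₁ fun j hj => (hba j).trans ?_
  gcongr
  calc ‖a j - a i‖ ≤ ‖a j - e‖ + ‖e - a i‖ := norm_sub_le_norm_sub_add_norm_sub _ _ _
    _ ≤ s + r := by rw [norm_sub_rev]; linarith [hw j hj]

theorem norm_comp_sub_le_of_nets {ι E F : Type*} [SeminormedAddCommGroup E] [NormedSpace ℝ E]
    [SeminormedAddCommGroup F] [NormedSpace ℝ F] {a : ι → E} {b : ι → F} {K lam : ℝ}
    (hK : 0 ≤ K) (hba : ∀ i j, ‖b j - b i‖ ≤ K * ‖a j - a i‖)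
    (hab : ∀ i j, ‖a j - a i‖ ≤ K * ‖b j - b i‖) (ha : ∀ e : E, ∃ i, ‖e - a i‖ < lam)
    {w : ι → E → ℝ} (hw₀ : ∀ j e, 0 ≤ w j e) (hw₁ : ∀ e, ∑ᶠ j, w j e = 1)
    (hw : ∀ j e, w j e ≠ 0 → ‖e - a j‖ < lam)
    {v : ι → F → ℝ} (hv₀ : ∀ j y, 0 ≤ v j y) (hv₁ : ∀ y, ∑ᶠ j, v j y = 1)
    (hv : ∀ j y, v j y ≠ 0 → ‖y - b j‖ < lam)
    {P : E → F} (hP : ∀ e, P e = ∑ᶠ j, w j e • b j)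
    {Q : F → E} (hQ : ∀ y, Q y = ∑ᶠ j, v j y • a j) (e : E) :
    ‖Q (P e) - e‖ ≤ (1 + K + 2 * K ^ 2) * lam := by
  obtain ⟨i, hi⟩ := ha e
  have hPe : ‖P e - b i‖ ≤ K * (lam + lam) := by
    rw [hP]
    exact norm_finsum_smul_sub_le_of_subordinate hK (hba i) (hw₀ · e) (hw₁ e) (hw · e) hi.le
  have hQPe : ‖Q (P e) - a i‖ ≤ K * (K * (lam + lam) + lam) := by
    rw [hQ]
    exact norm_finsum_smul_sub_le_of_subordinate hK (hab i) (hv₀ · _) (hv₁ _) (hv · _) hPe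
  calc ‖Q (P e) - e‖ ≤ ‖Q (P e) - a i‖ + ‖a i - e‖ := norm_sub_le_norm_sub_add_norm_sub _ _ _
    _ = ‖Q (P e) - a i‖ + ‖e - a i‖ := by rw [norm_sub_rev (a i)]
    _ ≤ K * (K * (lam + lam) + lam) + lam := add_le_add hQPe hi.le
    _ = (1 + K + 2 * K ^ 2) * lam := by ring

theorem net_maps_almost_inverse_general
    {X Y : Type*} [NormedAddCommGroup X] [NormedSpace ℝ X]
    [NormedAddCommGroup Y] [NormedSpace ℝ Y]
    {I : Type*} (xi : I → X) (yi : I → Y) (K lam : ℝ) (hK : 1 ≤ K)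
    -- `(x i)` is a `(1, λ)`-net in `X`:
    (hxdense : ∀ x : X, ∃ i, ‖x - xi i‖ < lam)
    -- `(y i)` is a `(1, λ)`-net in `Y`:
    (hydense : ∀ y : Y, ∃ i, ‖y - yi i‖ < lam)
    -- the nets are `K`-Lipschitz equivalent:
    (hnet : ∀ i j, K⁻¹ * ‖xi i - xi j‖ ≤ ‖yi i - yi j‖ ∧ ‖yi i - yi j‖ ≤ K * ‖xi i - xi j‖)
    -- `(f i)` is a continuous partition of unity subordinate to `(B(x i, λ))`:
    (f : I → X → ℝ)
    (hfnonneg : ∀ i x, 0 ≤ f i x)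
    (hfsum : ∀ x : X, ∑ᶠ i, f i x = 1)
    (hfsupp : ∀ i x, f i x ≠ 0 → ‖x - xi i‖ < lam)
    -- `(g i)` is a continuous partition of unity subordinate to `(B(y i, λ))`:
    (g : I → Y → ℝ)
    (hgnonneg : ∀ i y, 0 ≤ g i y)
    (hgsum : ∀ y : Y, ∑ᶠ i, g i y = 1)
    (hgsupp : ∀ i y, g i y ≠ 0 → ‖y - yi i‖ < lam)
    -- the maps `U` and `V`:
    (U : X → Y) (hU : ∀ x, U x = ∑ᶠ j, f j x • yi j)
    (V : Y → X) (hV : ∀ y, V y = ∑ᶠ j, g j y • xi j) :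
    (∀ x : X, ‖V (U x) - x‖ ≤ (1 + K + 2 * K ^ 2) * lam) ∧
      (∀ y : Y, ‖U (V y) - y‖ ≤ (1 + K + 2 * K ^ 2) * lam) := by
  have hK₀ : 0 < K := one_pos.trans_le hK
  have hyx : ∀ i j, ‖yi j - yi i‖ ≤ K * ‖xi j - xi i‖ := fun i j => (hnet j i).2
  have hxy : ∀ i j, ‖xi j - xi i‖ ≤ K * ‖yi j - yi i‖ := fun i j =>
    (inv_mul_le_iff₀ hK₀).1 (hnet j i).1
  exact ⟨norm_comp_sub_le_of_nets hK₀.le hyx hxy hxdense hfnonneg hfsum hfsupp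
      hgnonneg hgsum hgsupp hU hV,
    norm_comp_sub_le_of_nets hK₀.le hxy hyx hydense hgnonneg hgsum hgsupp
      hfnonneg hfsum hfsupp hV hU⟩

/-- With `U x = ∑ f j (x) • y j` and `V y = ∑ g j (y) • x j` built from continuous
partitions of unity subordinate to the balls of radius `λ` around `K`-Lipschitz
equivalent `(1, λ)`-nets `(x i)` of `X` and `(y i)` of `Y`, one has, with
`C = (1 + K + 2K²) λ`, the estimates `‖V (U x) - x‖ ≤ C` and `‖U (V y) - y‖ ≤ C`. -/
theorem net_maps_almost_inverse
    {X Y : Type*} [NormedAddCommGroup X] [NormedSpace ℝ X] [CompleteSpace X]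
    [NormedAddCommGroup Y] [NormedSpace ℝ Y] [CompleteSpace Y]
    {I : Type*} (xi : I → X) (yi : I → Y) (K lam : ℝ) (hK : 1 ≤ K) (hlam : 1 < lam)
    -- `(x i)` is a `(1, λ)`-net in `X`:
    (hxsep : ∀ i j, i ≠ j → 1 ≤ ‖xi i - xi j‖)
    (hxdense : ∀ x : X, ∃ i, ‖x - xi i‖ < lam)
    -- `(y i)` is a `(1, λ)`-net in `Y`:
    (hysep : ∀ i j, i ≠ j → 1 ≤ ‖yi i - yi j‖)
    (hydense : ∀ y : Y, ∃ i, ‖y - yi i‖ < lam)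
    -- the nets are `K`-Lipschitz equivalent:
    (hnet : ∀ i j, K⁻¹ * ‖xi i - xi j‖ ≤ ‖yi i - yi j‖ ∧ ‖yi i - yi j‖ ≤ K * ‖xi i - xi j‖)
    -- `(f i)` is a continuous partition of unity subordinate to `(B(x i, λ))`:
    (f : I → X → ℝ) (hfcont : ∀ i, Continuous (f i))
    (hfnonneg : ∀ i x, 0 ≤ f i x)
    (hfin : ∀ x : X, (Function.support fun i => f i x).Finite)
    (hfsum : ∀ x : X, ∑ᶠ i, f i x = 1)
    (hfsupp : ∀ i x, f i x ≠ 0 → ‖x - xi i‖ < lam)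
    -- `(g i)` is a continuous partition of unity subordinate to `(B(y i, λ))`:
    (g : I → Y → ℝ) (hgcont : ∀ i, Continuous (g i))
    (hgnonneg : ∀ i y, 0 ≤ g i y)
    (hgfin : ∀ y : Y, (Function.support fun i => g i y).Finite)
    (hgsum : ∀ y : Y, ∑ᶠ i, g i y = 1)
    (hgsupp : ∀ i y, g i y ≠ 0 → ‖y - yi i‖ < lam)
    -- the maps `U` and `V`:
    (U : X → Y) (hU : ∀ x, U x = ∑ᶠ j, f j x • yi j)
    (V : Y → X) (hV : ∀ y, V y = ∑ᶠ j, g j y • xi j) :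
    (∀ x : X, ‖V (U x) - x‖ ≤ (1 + K + 2 * K ^ 2) * lam) ∧
      (∀ y : Y, ‖U (V y) - y‖ ≤ (1 + K + 2 * K ^ 2) * lam) :=
  net_maps_almost_inverse_general xi yi K lam hK hxdense hydense hnet f hfnonneg hfsum hfsupp g
    hgnonneg hgsum hgsupp U hU V hV
end

section
/- Let X be a normed space, M a metric space and f : X → M a coarse Lipschitz map with Lip_∞(f) > 0. Then for any t, ε > 0 and any 0 < δ < 1 there exist x, y ∈ X with ‖x − y‖ > t such that f(Mid(x, y, δ)) ⊆ Mid(f(x), f(y), (1+ε)δ). -/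
open scoped ENNReal

/-- `Lip_s (f) = sup { d(f x, f y) / ‖x - y‖ : ‖x - y‖ ≥ s }`. -/
noncomputable def lipS {X M : Type*} [NormedAddCommGroup X] [MetricSpace M]
    (f : X → M) (s : ℝ) : ℝ≥0∞ :=
  ⨆ (p : X × X) (_ : s ≤ ‖p.1 - p.2‖), ENNReal.ofReal (dist (f p.1) (f p.2) / ‖p.1 - p.2‖)

/-- `Lip_∞ (f) = inf_{s > 0} Lip_s (f)`. -/
noncomputable def lipInf {X M : Type*} [NormedAddCommGroup X] [MetricSpace M]
    (f : X → M) : ℝ≥0∞ :=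
  ⨅ (s : ℝ) (_ : 0 < s), lipS f s

/-!
Write `L = Lip_∞(f)` and choose `c < L < C` with `C (1 + δ) = c (1 + (1 + ε) δ)`.
Above some scale `s`, `f` expands distances by at most `C`, while at every scale there is a
pair `x, y` that `f` expands by more than `c`; take one with
`‖x - y‖ ≥ max (t + 1) (2s / (1 - δ))`.
A point `z ∈ Mid(x, y, δ)` lies at distance at least `(1 - δ) d(x, y) / 2 ≥ s` from `x` and
from `y`, so `d(f x, f z) ≤ C (1 + δ) d(x, y) / 2 = c (1 + (1 + ε) δ) d(x, y) / 2
≤ (1 + (1 + ε) δ) d(f x, f y) / 2`, and likewise for `y`.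
-/

section Mid

variable {X : Type*} [MetricSpace X] {x y z : X} {δ : ℝ}

theorem mem_Mid_iff :
    z ∈ Mid x y δ ↔ dist x z ≤ (1 + δ) * dist x y / 2 ∧ dist y z ≤ (1 + δ) * dist x y / 2 :=
  max_le_iff (a := dist x z)

theorem Mid_comm (x y : X) (δ : ℝ) : Mid x y δ = Mid y x δ := by
  ext z
  simp only [mem_Mid_iff, dist_comm x y, and_comm]

theorem one_sub_mul_dist_div_two_le_of_mem_Mid (hz : z ∈ Mid x y δ) :
    (1 - δ) * dist x y / 2 ≤ dist x z := by
  have hyz := (mem_Mid_iff.mp hz).2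
  linarith [dist_triangle_right x y z]

end Mid

section Transfer

variable {X M : Type*} [MetricSpace X] [MetricSpace M] {f : X → M} {x y : X}
  {s c C δ δ' : ℝ}

theorem dist_apply_le_of_mem_Mid
    (hupper : ∀ a b, s ≤ dist a b → dist (f a) (f b) ≤ C * dist a b)
    (hlower : c * dist x y ≤ dist (f x) (f y)) (hfar : s ≤ (1 - δ) * dist x y / 2)
    (hratio : C * (1 + δ) ≤ c * (1 + δ')) (hC : 0 ≤ C) (hδ' : 0 ≤ 1 + δ')
    {z : X} (hz : z ∈ Mid x y δ) :
    dist (f x) (f z) ≤ (1 + δ') * dist (f x) (f y) / 2 :=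
  calc dist (f x) (f z)
      ≤ C * dist x z := hupper x z (hfar.trans (one_sub_mul_dist_div_two_le_of_mem_Mid hz))
    _ ≤ C * ((1 + δ) * dist x y / 2) := by gcongr; exact (mem_Mid_iff.mp hz).1
    _ = C * (1 + δ) * dist x y / 2 := by ring
    _ ≤ c * (1 + δ') * dist x y / 2 := by gcongr
    _ = (1 + δ') * (c * dist x y) / 2 := by ring
    _ ≤ (1 + δ') * dist (f x) (f y) / 2 := by gcongr

theorem image_Mid_subset_Mid
    (hupper : ∀ a b, s ≤ dist a b → dist (f a) (f b) ≤ C * dist a b)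
    (hlower : c * dist x y ≤ dist (f x) (f y)) (hfar : s ≤ (1 - δ) * dist x y / 2)
    (hratio : C * (1 + δ) ≤ c * (1 + δ')) (hC : 0 ≤ C) (hδ' : 0 ≤ 1 + δ') :
    f '' Mid x y δ ⊆ Mid (f x) (f y) δ' := by
  rintro _ ⟨z, hz, rfl⟩
  refine mem_Mid_iff.mpr ⟨dist_apply_le_of_mem_Mid hupper hlower hfar hratio hC hδ' hz, ?_⟩
  rw [Mid_comm] at hz
  rw [dist_comm x y] at hlower hfar
  rw [dist_comm (f x) (f y)] at hlower ⊢
  exact dist_apply_le_of_mem_Mid hupper hlower hfar hratio hC hδ' hz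

end Transfer

section CoarseLipschitz

variable {X M : Type*} [NormedAddCommGroup X] [MetricSpace M] {f : X → M} {s K : ℝ}

theorem dist_le_mul_dist_of_lipS_le (hK : 0 ≤ K) (h : lipS f s ≤ ENNReal.ofReal K) {a b : X}
    (hab : s ≤ dist a b) : dist (f a) (f b) ≤ K * dist a b := by
  rw [dist_eq_norm] at hab ⊢
  have hratio : ENNReal.ofReal (dist (f a) (f b) / ‖a - b‖) ≤ ENNReal.ofReal K :=
    (le_iSup₂ (α := ℝ≥0∞) (a, b) hab).trans h
  rcases (norm_nonneg (a - b)).eq_or_lt with hab0 | hab0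
  · rw [← hab0, sub_eq_zero.mp (norm_eq_zero.mp hab0.symm), dist_self, mul_zero]
  · exact (div_le_iff₀ hab0).mp ((ENNReal.ofReal_le_ofReal_iff hK).mp hratio)

theorem exists_mul_dist_lt_of_ofReal_lt_lipS (h : ENNReal.ofReal K < lipS f s) :
    ∃ a b : X, s ≤ dist a b ∧ K * dist a b < dist (f a) (f b) := by
  simp only [lipS, lt_iSup_iff] at h
  obtain ⟨⟨a, b⟩, hab, hlt⟩ := h
  obtain ⟨hK, hpos⟩ := ENNReal.ofReal_lt_ofReal_iff'.mp hlt
  have hnorm : 0 < ‖a - b‖ := (norm_nonneg _).lt_of_ne fun h => by simp [← h] at hpos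
  refine ⟨a, b, by rwa [dist_eq_norm], ?_⟩
  rw [dist_eq_norm]
  exact (lt_div_iff₀ hnorm).mp hK

theorem lipInf_le_lipS (hs : 0 < s) : lipInf f ≤ lipS f s :=
  iInf₂_le s hs

theorem exists_lipS_lt_of_lipInf_lt {c : ℝ≥0∞} (h : lipInf f < c) : ∃ s > 0, lipS f s < c := by
  simpa only [lipInf, iInf_lt_iff, exists_prop] using h

end CoarseLipschitz

theorem ENNReal.exists_ofReal_lt_lt_ofReal_mul {a : ℝ≥0∞} (ha₀ : 0 < a) (ha : a < ∞) {q : ℝ}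
    (hq : 1 < q) : ∃ c : ℝ, 0 < c ∧ ENNReal.ofReal c < a ∧ a < ENNReal.ofReal (q * c) := by
  have hL : 0 < a.toReal := ENNReal.toReal_pos ha₀.ne' ha.ne
  obtain ⟨c, hLc, hcL⟩ := exists_between (div_lt_self hL hq)
  have hc : 0 < c := (div_pos hL (zero_lt_one.trans hq)).trans hLc
  refine ⟨c, hc, ?_, ?_⟩
  · rwa [← ENNReal.ofReal_toReal ha.ne, ENNReal.ofReal_lt_ofReal_iff hL]
  · rwa [← ENNReal.ofReal_toReal ha.ne, ENNReal.ofReal_lt_ofReal_iff (by positivity),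
      ← div_lt_iff₀' (zero_lt_one.trans hq)]

theorem approximate_midpoint_principle_general
    {X M : Type*} [NormedAddCommGroup X] [MetricSpace M]
    (f : X → M) (hcl : lipInf f < ∞) (hpos : 0 < lipInf f)
    (t ε δ : ℝ) (hε : 0 < ε) (hδ₀ : 0 < δ) (hδ₁ : δ < 1) :
    ∃ x y : X, t < ‖x - y‖ ∧
      f '' Mid x y δ ⊆ Mid (f x) (f y) ((1 + ε) * δ) := by
  set q := (1 + (1 + ε) * δ) / (1 + δ)
  have hq : 1 < q := (one_lt_div (by positivity)).mpr (by nlinarith)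
  obtain ⟨c, hc, hcf, hfc⟩ := ENNReal.exists_ofReal_lt_lt_ofReal_mul hpos hcl hq
  obtain ⟨s, hs, hsC⟩ := exists_lipS_lt_of_lipInf_lt hfc
  set r := max (t + 1) (2 * s / (1 - δ))
  have hr : 0 < r := lt_max_of_lt_right (div_pos (by positivity) (sub_pos.mpr hδ₁))
  obtain ⟨x, y, hxy, hlow⟩ :=
    exists_mul_dist_lt_of_ofReal_lt_lipS (hcf.trans_le (lipInf_le_lipS hr))
  refine ⟨x, y, ?_, image_Mid_subset_Mid
    (fun a b => dist_le_mul_dist_of_lipS_le (by positivity) hsC.le) hlow.le ?_ ?_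
    (by positivity) (by positivity)⟩
  · rw [← dist_eq_norm]
    linarith [le_max_left (t + 1) (2 * s / (1 - δ))]
  · have h2s := (div_le_iff₀ (sub_pos.mpr hδ₁)).mp ((le_max_right _ _).trans hxy)
    linarith
  · rw [mul_comm q c, mul_assoc, div_mul_cancel₀ _ (by positivity)]

/-- The approximate midpoint principle: if `f : X → M` is coarse Lipschitz with
`Lip_∞ (f) > 0`, then for any `t, ε > 0` and `0 < δ < 1` there are `x, y` with
`‖x - y‖ > t` and `f (Mid (x, y, δ)) ⊆ Mid (f x, f y, (1+ε) δ)`. -/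
theorem approximate_midpoint_principle
    {X M : Type*} [NormedAddCommGroup X] [NormedSpace ℝ X] [MetricSpace M]
    (f : X → M) (hcl : lipInf f < ∞) (hpos : 0 < lipInf f)
    (t ε δ : ℝ) (ht : 0 < t) (hε : 0 < ε) (hδ₀ : 0 < δ) (hδ₁ : δ < 1) :
    ∃ x y : X, t < ‖x - y‖ ∧
      f '' Mid x y δ ⊆ Mid (f x) (f y) ((1 + ε) * δ) :=
  approximate_midpoint_principle_general f hcl hpos t ε δ hε hδ₀ hδ₁
end

section
/- Let X be a Banach space and Q : Y → X a quotient (surjective bounded linear) map. Suppose for some 0 < λ < 1 there is a uniformly continuous map φ : S_X → Y with ‖Q(φ(x)) − x‖ ≤ λ for all x ∈ S_X. Then there exists a uniformly continuous map f : B_X → Y with Q(f(x)) = x for all x ∈ B_X. -/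
/-!
Extend `φ` positively homogeneously to `ψ : X → Y`. Then `g := id - Q ∘ ψ` shrinks norms by the
factor `λ`, so on the unit ball `f := ∑ₙ ψ ∘ gⁿ` converges uniformly and `Q ∘ f` telescopes to
`∑ₙ (gⁿ - gⁿ⁺¹) = id`. For `ψ`, hence `f`, to be uniformly continuous on the ball, `φ` has to be
bounded. It is: if `dim X ≥ 2`, any two points of the sphere are joined by a chain of four
normalized segments, each `4`-Lipschitz in its parameter, along which `φ` moves a bounded amount
by uniform continuity; otherwise the sphere is compact.
-/

open Metric Filter Topology NormedSpace
open scoped NNReal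

theorem uniformContinuous_tsum {α E : Type*} [UniformSpace α] [NormedAddCommGroup E]
    [CompleteSpace E] {F : ℕ → α → E} (hF : ∀ n, UniformContinuous (F n)) {u : ℕ → ℝ}
    (hu : Summable u) (hFu : ∀ n x, ‖F n x‖ ≤ u n) :
    UniformContinuous fun x => ∑' n, F n x := by
  refine (tendstoUniformly_tsum_nat hu hFu).uniformContinuous (.of_forall fun N => ?_)
  rw [← Finset.sum_fn]
  exact Finset.sum_induction _ UniformContinuous (fun _ _ => .add) uniformContinuous_const
    fun n _ => hF n

theorem ContinuousLinearMap.map_tsum_iterate_eq_self {X Y : Type*} [NormedAddCommGroup X]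
    [NormedSpace ℝ X] [NormedAddCommGroup Y] [NormedSpace ℝ Y] (Q : Y →L[ℝ] X) {ψ : X → Y}
    {g : X → X} (hQψ : ∀ y, Q (ψ y) = y - g y) {x : X}
    (hs : Summable fun n => ψ (g^[n] x)) (hlim : Tendsto (fun n => g^[n] x) atTop (𝓝 0)) :
    Q (∑' n, ψ (g^[n] x)) = x := by
  have partial_sum : ∀ N, ∑ n ∈ Finset.range N, Q (ψ (g^[n] x)) = x - g^[N] x := fun N => by
    simp only [hQψ, ← Function.iterate_succ_apply' g, Finset.sum_range_sub',
      Function.iterate_zero_apply]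
  rw [Q.map_tsum hs]
  refine tendsto_nhds_unique (hs.mapL Q).tendsto_sum_tsum_nat ?_
  simpa [partial_sum] using tendsto_const_nhds.sub hlim

theorem norm_iterate_le_pow_mul {X : Type*} [SeminormedAddCommGroup X] {g : X → X} {c : ℝ}
    (hc : 0 ≤ c) (hg : ∀ x, ‖g x‖ ≤ c * ‖x‖) (x : X) (n : ℕ) : ‖g^[n] x‖ ≤ c ^ n * ‖x‖ := by
  induction n with
  | zero => simp
  | succ n ih =>
    rw [Function.iterate_succ_apply', pow_succ', mul_assoc]
    exact (hg _).trans (mul_le_mul_of_nonneg_left ih hc)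

theorem exists_uniformContinuous_selection_of_approx {X Y : Type*} [NormedAddCommGroup X]
    [NormedSpace ℝ X] [NormedAddCommGroup Y] [NormedSpace ℝ Y] [CompleteSpace Y]
    (Q : Y →L[ℝ] X) {ψ : X → Y} {M lam : ℝ} (hlam₀ : 0 ≤ lam) (hlam₁ : lam < 1) (hM : 0 ≤ M)
    (hψ : UniformContinuousOn ψ (closedBall 0 1)) (hψM : ∀ x, ‖ψ x‖ ≤ M * ‖x‖)
    (hψQ : ∀ x, ‖x - Q (ψ x)‖ ≤ lam * ‖x‖) :
    ∃ f : closedBall (0 : X) 1 → Y, UniformContinuous f ∧ ∀ x, Q (f x) = x := by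
  set g : X → X := fun x => x - Q (ψ x)
  have hgB : Set.MapsTo g (closedBall 0 1) (closedBall 0 1) := fun x hx => by
    rw [mem_closedBall_zero_iff] at hx ⊢
    exact (hψQ x).trans (mul_le_one₀ hlam₁.le (norm_nonneg x) hx)
  have hgn : ∀ n, ∀ x ∈ closedBall (0 : X) 1, ‖g^[n] x‖ ≤ lam ^ n := fun n x hx =>
    (norm_iterate_le_pow_mul hlam₀ hψQ x n).trans
      (mul_le_of_le_one_right (by positivity) (mem_closedBall_zero_iff.1 hx))
  have hψgn : ∀ n, ∀ x ∈ closedBall (0 : X) 1, ‖ψ (g^[n] x)‖ ≤ M * lam ^ n := fun n x hx =>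
    (hψM _).trans (by gcongr; exact hgn n x hx)
  have hsum : Summable fun n => M * lam ^ n :=
    (summable_geometric_of_lt_one hlam₀ hlam₁).mul_left M
  have hg : UniformContinuous (hgB.restrict g _ _) :=
    (uniformContinuous_subtype_val.sub (Q.uniformContinuous.comp hψ.restrict)).subtype_mk _
  refine ⟨fun x => ∑' n, ψ (g^[n] x), ?_, fun x => ?_⟩
  · refine uniformContinuous_tsum (fun n => ?_) hsum fun n x => hψgn n x x.2
    convert hψ.restrict.comp (hg.iterate _ n) using 1
    ext x
    simp [hgB.iterate_restrict]
  · refine Q.map_tsum_iterate_eq_self (fun y => (sub_sub_cancel y _).symm)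
      (.of_norm_bounded hsum fun n => hψgn n x x.2) ?_
    exact squeeze_zero_norm (fun n => hgn n x x.2)
      (tendsto_pow_atTop_nhds_zero_of_lt_one hlam₀ hlam₁)

theorem UniformContinuous.exists_dist_le_of_lipschitzWith {α β : Type*} [PseudoMetricSpace α]
    [PseudoMetricSpace β] {φ : α → β} (hφ : UniformContinuous φ) (K : ℝ≥0) :
    ∃ C, ∀ γ : unitInterval → α, LipschitzWith K γ → dist (φ (γ 0)) (φ (γ 1)) ≤ C := by
  obtain ⟨δ, hδ, hφδ⟩ := Metric.uniformContinuous_iff.1 hφ 1 one_pos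
  obtain ⟨n, hn⟩ := exists_nat_gt (K / δ)
  have hn₀ : (0 : ℝ) < n := (div_nonneg K.2 hδ.le).trans_lt hn
  refine ⟨n, fun γ hγ => ?_⟩
  let t : ℕ → unitInterval := fun k => Set.projIcc 0 1 zero_le_one (k / n)
  have step : ∀ k, dist (φ (γ (t k))) (φ (γ (t (k + 1)))) ≤ 1 := by
    intro k
    refine (hφδ ((hγ.dist_le_mul _ _).trans_lt ?_)).le
    have : dist (t k) (t (k + 1)) ≤ 1 / n := by
      refine (Set.abs_projIcc_sub_projIcc _).trans_eq ?_
      rw [abs_sub_comm, ← sub_div, Nat.cast_succ, add_sub_cancel_left, abs_of_pos (by positivity)]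
    calc (K : ℝ) * dist (t k) (t (k + 1)) ≤ K * (1 / n) := by gcongr
      _ < δ := by rw [mul_one_div, div_lt_iff₀ hn₀]; rwa [div_lt_iff₀ hδ, mul_comm] at hn
  have ht₀ : t 0 = 0 := by simp [t]
  have ht₁ : t n = 1 := by simp [t, hn₀.ne']
  calc dist (φ (γ 0)) (φ (γ 1)) ≤ ∑ k ∈ Finset.range n, dist (φ (γ (t k))) (φ (γ (t (k + 1)))) := by
        simpa [ht₀, ht₁] using dist_le_range_sum_dist (fun k => φ (γ (t k))) n
    _ ≤ n := by simpa using Finset.sum_le_card_nsmul (Finset.range n) _ _ fun k _ => step k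

theorem NormedSpace.norm_normalize_le {X : Type*} [NormedAddCommGroup X]
    [NormedSpace ℝ X] (x : X) : ‖normalize x‖ ≤ 1 := by
  rcases eq_or_ne x 0 with rfl | hx
  · simp
  · exact (norm_normalize hx).le

theorem NormedSpace.norm_normalize_sub_normalize_le {X : Type*} [NormedAddCommGroup X]
    [NormedSpace ℝ X] (x : X) {y : X} (hy : y ≠ 0) :
    ‖normalize x - normalize y‖ ≤ 2 * ‖x - y‖ / ‖y‖ := by
  have hy' : 0 < ‖y‖ := norm_pos_iff.2 hy
  have decomp : normalize x - normalize y = ‖y‖⁻¹ • ((x - y) + (‖y‖ - ‖x‖) • normalize x) := by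
    rw [smul_add, smul_smul, inv_mul_eq_div, sub_div, div_self hy'.ne', sub_smul, one_smul,
      div_eq_inv_mul, mul_smul, norm_smul_normalize, normalize, normalize]
    module
  have hnorm : |‖y‖ - ‖x‖| * ‖normalize x‖ ≤ ‖x - y‖ :=
    (mul_le_of_le_one_right (abs_nonneg _) (norm_normalize_le x)).trans
      (by rw [abs_sub_comm]; exact abs_norm_sub_norm_le x y)
  rw [decomp, norm_smul, norm_inv, norm_norm, inv_mul_eq_div]
  gcongr
  calc ‖x - y + (‖y‖ - ‖x‖) • normalize x‖ ≤ ‖x - y‖ + |‖y‖ - ‖x‖| * ‖normalize x‖ :=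
        (norm_add_le _ _).trans_eq (by rw [norm_smul, Real.norm_eq_abs])
    _ ≤ 2 * ‖x - y‖ := by linarith

section Sphere

variable {X : Type*} [NormedAddCommGroup X] [NormedSpace ℝ X]

theorem one_half_le_norm_lineMap {u v : X} (hu : ‖u‖ = 1) (hv : ‖v‖ = 1) (huv : dist u v ≤ 1)
    {t : ℝ} (ht : t ∈ Set.Icc 0 1) : 1 / 2 ≤ ‖AffineMap.lineMap u v t‖ := by
  have hu' := norm_le_norm_add_norm_sub' u (AffineMap.lineMap u v t)
  have hv' := norm_le_norm_add_norm_sub' v (AffineMap.lineMap u v t)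
  rw [← dist_eq_norm, dist_comm, dist_lineMap_left, Real.norm_of_nonneg ht.1] at hu'
  rw [← dist_eq_norm, dist_comm, dist_lineMap_right, Real.norm_of_nonneg (sub_nonneg.2 ht.2)] at hv'
  nlinarith [ht.1, ht.2]

theorem exists_lipschitzWith_path_sphere {u v : sphere (0 : X) 1} (huv : dist u v ≤ 1) :
    ∃ γ : unitInterval → sphere (0 : X) 1, LipschitzWith 4 γ ∧ γ 0 = u ∧ γ 1 = v := by
  have hu : ‖(u : X)‖ = 1 := by simp
  have hv : ‖(v : X)‖ = 1 := by simp
  let c : unitInterval → X := fun t => AffineMap.lineMap (u : X) v (t : ℝ)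
  have hc : ∀ t, 1 / 2 ≤ ‖c t‖ := fun t => one_half_le_norm_lineMap hu hv huv t.2
  have hc₀ : ∀ t, c t ≠ 0 := fun t => norm_pos_iff.1 ((one_half_pos).trans_le (hc t))
  refine ⟨fun t => ⟨normalize (c t), by simpa using hc₀ t⟩, .of_dist_le_mul fun s t => ?_, ?_, ?_⟩
  · rw [Subtype.dist_eq, dist_eq_norm]
    calc ‖normalize (c s) - normalize (c t)‖ ≤ 2 * ‖c s - c t‖ / ‖c t‖ :=
          norm_normalize_sub_normalize_le _ (hc₀ t)
      _ ≤ 2 * ‖c s - c t‖ / (1 / 2) := by gcongr; exact hc t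
      _ ≤ 4 * dist s t := by
          have huv' : dist (u : X) v ≤ 1 := huv
          rw [← dist_eq_norm, dist_lineMap_lineMap, Subtype.dist_eq s t]
          nlinarith [dist_nonneg (x := (s : ℝ)) (y := t)]
  · ext; simp [c, normalize_eq_self_of_norm_eq_one hu]
  · ext; simp [c, normalize_eq_self_of_norm_eq_one hv]

theorem UniformContinuous.exists_dist_le_of_dist_le_one_sphere {Y : Type*} [PseudoMetricSpace Y]
    {φ : sphere (0 : X) 1 → Y} (hφ : UniformContinuous φ) :
    ∃ C, ∀ u v, dist u v ≤ 1 → dist (φ u) (φ v) ≤ C := by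
  obtain ⟨C, hC⟩ := hφ.exists_dist_le_of_lipschitzWith 4
  refine ⟨C, fun u v huv => ?_⟩
  obtain ⟨γ, hγ, rfl, rfl⟩ := exists_lipschitzWith_path_sphere huv
  exact hC γ hγ

theorem NormedSpace.norm_normalize_add_sub_le_one {u v : X} (hu : ‖u‖ = 1) (hv : ‖v‖ = 1)
    (huv : 1 ≤ ‖u + v‖) : ‖normalize (u + v) - u‖ ≤ 1 := by
  set s := ‖u + v‖
  have hs : 0 < s := one_pos.trans_le huv
  have : normalize (u + v) - u = s⁻¹ • (v - (s - 1) • u) := by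
    rw [normalize, smul_sub, smul_smul, inv_mul_eq_div, sub_div, div_self hs.ne', sub_smul,
      one_smul, div_eq_inv_mul, mul_smul]
    module
  rw [this, norm_smul, norm_inv, Real.norm_of_nonneg hs.le, inv_mul_le_one₀ hs]
  calc ‖v - (s - 1) • u‖ ≤ ‖v‖ + ‖(s - 1) • u‖ := norm_sub_le _ _
    _ = s := by rw [norm_smul, Real.norm_of_nonneg (sub_nonneg.2 huv), hu, hv]; ring

theorem exists_dist_le_one_of_one_le_norm_add {u v : sphere (0 : X) 1}
    (huv : 1 ≤ ‖(u : X) + v‖) : ∃ w : sphere (0 : X) 1, dist u w ≤ 1 ∧ dist w v ≤ 1 := by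
  have hu : ‖(u : X)‖ = 1 := by simp
  have hv : ‖(v : X)‖ = 1 := by simp
  have h₀ : (u : X) + v ≠ 0 := norm_pos_iff.1 (one_pos.trans_le huv)
  refine ⟨⟨normalize ((u : X) + v), by simpa using h₀⟩, ?_, ?_⟩
  · rw [dist_comm, Subtype.dist_eq, dist_eq_norm]
    exact norm_normalize_add_sub_le_one hu hv huv
  · have := norm_normalize_add_sub_le_one hv hu (by rwa [add_comm])
    rw [add_comm (v : X)] at this
    rwa [Subtype.dist_eq, dist_eq_norm]

theorem one_le_norm_add_or_one_le_norm_sub {u : X} (hu : ‖u‖ = 1) (v : X) :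
    1 ≤ ‖v + u‖ ∨ 1 ≤ ‖v - u‖ := by
  by_contra! h
  have : ‖(v + u) - (v - u)‖ = 2 := by
    rw [add_sub_sub_cancel, ← two_smul ℝ, norm_smul, hu]; norm_num
  linarith [norm_sub_le (v + u) (v - u)]

theorem exists_one_le_norm_add_and_one_le_norm_sub (hX : 1 < Module.rank ℝ X) {u : X}
    (hu : ‖u‖ = 1) : ∃ z, ‖z‖ = 1 ∧ 1 ≤ ‖z + u‖ ∧ 1 ≤ ‖z - u‖ := by
  obtain ⟨z, hz, hzu⟩ := (isPreconnected_sphere hX 0 1).intermediate_value₂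
    (f := fun z => ‖z - u‖) (g := fun z => ‖z + u‖) (a := u) (b := -u) (by simpa using hu)
    (by simpa using hu) (by fun_prop) (by fun_prop) (by simp) (by simp)
  refine ⟨z, by simpa using hz, ?_⟩
  rcases one_le_norm_add_or_one_le_norm_sub hu z with h | h <;>
    exact ⟨by linarith, by linarith⟩

theorem isBounded_range_of_uniformContinuous_sphere {Y : Type*} [PseudoMetricSpace Y]
    {φ : sphere (0 : X) 1 → Y} (hφ : UniformContinuous φ) : Bornology.IsBounded (Set.range φ) := by
  rcases le_or_gt (Module.rank ℝ X) 1 with hX | hX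
  · have : FiniteDimensional ℝ X := Module.rank_lt_aleph0_iff.1 (hX.trans_lt Cardinal.one_lt_aleph0)
    have : CompactSpace (sphere (0 : X) 1) := isCompact_iff_compactSpace.1 (isCompact_sphere 0 1)
    exact (isCompact_range hφ.continuous).isBounded
  obtain ⟨C, hC⟩ := hφ.exists_dist_le_of_dist_le_one_sphere
  have step : ∀ u v : sphere (0 : X) 1, 1 ≤ ‖(u : X) + v‖ → dist (φ u) (φ v) ≤ 2 * C := by
    intro u v huv
    obtain ⟨w, huw, hwv⟩ := exists_dist_le_one_of_one_le_norm_add huv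
    linarith [dist_triangle (φ u) (φ w) (φ v), hC u w huw, hC w v hwv]
  have : Nontrivial X := (rank_pos_iff_nontrivial (R := ℝ)).1 (zero_lt_one.trans hX)
  obtain ⟨u⟩ := ((NormedSpace.sphere_nonempty (x := (0 : X))).2 zero_le_one).to_subtype
  have hu : ‖(u : X)‖ = 1 := by simp
  obtain ⟨z, hz, hzu, hzu'⟩ := exists_one_le_norm_add_and_one_le_norm_sub hX hu
  let z' : sphere (0 : X) 1 := ⟨z, by simpa using hz⟩
  refine (isBounded_iff_subset_closedBall (φ z')).2 ⟨4 * C, ?_⟩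
  rintro _ ⟨v, rfl⟩
  -- `v` reaches `z` in two such steps, through `u` or `-u`.
  obtain ⟨w, hvw, hwz⟩ : ∃ w : sphere (0 : X) 1, 1 ≤ ‖(v : X) + w‖ ∧ 1 ≤ ‖(w : X) + z‖ := by
    rcases one_le_norm_add_or_one_le_norm_sub hu v with h | h
    · exact ⟨u, h, by rwa [add_comm]⟩
    · exact ⟨-u, by simpa [sub_eq_add_neg] using h, by simpa [neg_add_eq_sub] using hzu'⟩
  rw [mem_closedBall]
  linarith [dist_triangle (φ v) (φ w) (φ z'), step v w hvw, step w z' hwz]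

end Sphere

section HomogeneousExtension

variable {X Y : Type*} [NormedAddCommGroup X] [NormedSpace ℝ X] [NormedAddCommGroup Y]
  [NormedSpace ℝ Y]

open scoped Classical in
noncomputable def homogeneousExtension (φ : sphere (0 : X) 1 → Y) (x : X) : Y :=
  if hx : x = 0 then 0 else ‖x‖ • φ ⟨NormedSpace.normalize x, by simpa using hx⟩

theorem homogeneousExtension_of_ne_zero (φ : sphere (0 : X) 1 → Y) {x : X} (hx : x ≠ 0) :
    homogeneousExtension φ x = ‖x‖ • φ ⟨NormedSpace.normalize x, by simpa using hx⟩ :=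
  dif_neg hx

theorem norm_homogeneousExtension_le {φ : sphere (0 : X) 1 → Y} {M : ℝ} (hM : ∀ u, ‖φ u‖ ≤ M)
    (x : X) : ‖homogeneousExtension φ x‖ ≤ M * ‖x‖ := by
  rcases eq_or_ne x 0 with rfl | hx
  · simp [homogeneousExtension]
  · rw [homogeneousExtension_of_ne_zero φ hx, norm_smul, norm_norm, mul_comm]
    exact mul_le_mul_of_nonneg_right (hM _) (norm_nonneg x)

theorem norm_sub_map_homogeneousExtension_le (Q : Y →ₗ[ℝ] X) {φ : sphere (0 : X) 1 → Y} {c : ℝ}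
    (hφQ : ∀ u, ‖Q (φ u) - u‖ ≤ c) (x : X) : ‖x - Q (homogeneousExtension φ x)‖ ≤ c * ‖x‖ := by
  rcases eq_or_ne x 0 with rfl | hx
  · simp [homogeneousExtension]
  · rw [homogeneousExtension_of_ne_zero φ hx, map_smul,
      show ∀ y, x - ‖x‖ • y = ‖x‖ • (normalize x - y) by simp [smul_sub],
      norm_smul, norm_norm, norm_sub_rev, mul_comm]
    exact mul_le_mul_of_nonneg_right (hφQ _) (norm_nonneg x)

theorem uniformContinuousOn_homogeneousExtension {φ : sphere (0 : X) 1 → Y}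
    (hφ : UniformContinuous φ) {M : ℝ} (hM₀ : 0 < M) (hM : ∀ u, ‖φ u‖ ≤ M) :
    UniformContinuousOn (homogeneousExtension φ) (closedBall 0 1) := by
  rw [Metric.uniformContinuousOn_iff]
  intro ε hε
  obtain ⟨δ, hδ, hφδ⟩ := Metric.uniformContinuous_iff.1 hφ (ε / 2) (half_pos hε)
  set r := ε / (4 * M)
  have hr : 0 < r := by positivity
  refine ⟨min (min r (ε / (2 * M))) (δ * r / 2), by positivity, fun x hx y hy hxy => ?_⟩
  simp only [lt_min_iff, dist_eq_norm] at hxy ⊢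
  obtain ⟨⟨hxy_r, hxy_M⟩, hxy_δ⟩ := hxy
  -- Near `0` both values are `O(M r)`; away from `0`, `normalize` is `2 / r`-Lipschitz.
  rcases le_or_gt ‖y‖ r with hy_small | hy_large
  · have hMr : M * r = ε / 4 := by simp only [r]; field_simp
    calc ‖homogeneousExtension φ x - homogeneousExtension φ y‖
        ≤ M * ‖x‖ + M * ‖y‖ := (norm_sub_le _ _).trans
          (add_le_add (norm_homogeneousExtension_le hM x) (norm_homogeneousExtension_le hM y))
      _ ≤ M * (‖y‖ + ‖x - y‖) + M * ‖y‖ := by gcongr; exact norm_le_norm_add_norm_sub' x y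
      _ < ε := by nlinarith
  have hy₀ : y ≠ 0 := norm_pos_iff.1 (hr.trans hy_large)
  have hx₀ : x ≠ 0 := by rintro rfl; simp only [zero_sub, norm_neg] at hxy_r; linarith
  rw [homogeneousExtension_of_ne_zero φ hx₀, homogeneousExtension_of_ne_zero φ hy₀]
  set u : sphere (0 : X) 1 := ⟨normalize x, by simpa using hx₀⟩
  set v : sphere (0 : X) 1 := ⟨normalize y, by simpa using hy₀⟩
  have huv : ‖φ u - φ v‖ < ε / 2 := by
    rw [← dist_eq_norm]
    refine hφδ ?_
    rw [Subtype.dist_eq, dist_eq_norm]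
    calc ‖normalize x - normalize y‖ ≤ 2 * ‖x - y‖ / ‖y‖ := norm_normalize_sub_normalize_le x hy₀
      _ ≤ 2 * ‖x - y‖ / r := by gcongr
      _ < δ := by rw [div_lt_iff₀ hr]; linarith
  calc ‖‖x‖ • φ u - ‖y‖ • φ v‖ = ‖(‖x‖ - ‖y‖) • φ u + ‖y‖ • (φ u - φ v)‖ := by
        congr 1; module
    _ ≤ |‖x‖ - ‖y‖| * ‖φ u‖ + ‖y‖ * ‖φ u - φ v‖ :=
        (norm_add_le _ _).trans_eq (by rw [norm_smul, norm_smul, Real.norm_eq_abs, norm_norm])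
    _ ≤ ‖x - y‖ * M + 1 * (ε / 2) := by
        gcongr
        · exact abs_norm_sub_norm_le x y
        · exact hM u
        · exact mem_closedBall_zero_iff.1 hy
    _ < ε := by
        have : ‖x - y‖ * M < ε / 2 := by rw [lt_div_iff₀ (by positivity)] at hxy_M; linarith
        linarith

end HomogeneousExtension

theorem uniformly_continuous_selection_of_quotient_general
    {X Y : Type*} [NormedAddCommGroup X] [NormedSpace ℝ X]
    [NormedAddCommGroup Y] [NormedSpace ℝ Y] [CompleteSpace Y]
    (Q : Y →L[ℝ] X)
    (lam : ℝ) (hlam₀ : 0 < lam) (hlam₁ : lam < 1)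
    (φ : Metric.sphere (0 : X) 1 → Y) (hφ : UniformContinuous φ)
    (hφQ : ∀ x : Metric.sphere (0 : X) 1, ‖Q (φ x) - (x : X)‖ ≤ lam) :
    ∃ f : Metric.closedBall (0 : X) 1 → Y,
      UniformContinuous f ∧ ∀ x : Metric.closedBall (0 : X) 1, Q (f x) = (x : X) := by
  obtain ⟨M, hM₀, hM⟩ := (isBounded_range_of_uniformContinuous_sphere hφ).exists_pos_norm_le
  replace hM : ∀ u, ‖φ u‖ ≤ M := fun u => hM _ ⟨u, rfl⟩
  exact exists_uniformContinuous_selection_of_approx Q hlam₀.le hlam₁ hM₀.le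
    (uniformContinuousOn_homogeneousExtension hφ hM₀ hM) (norm_homogeneousExtension_le hM)
    (norm_sub_map_homogeneousExtension_le (Q : Y →ₗ[ℝ] X) hφQ)

/-- Let `Q : Y → X` be a surjective bounded linear map between Banach spaces. If for
some `0 < λ < 1` there is a uniformly continuous `φ : S_X → Y` with
`‖Q (φ x) - x‖ ≤ λ` on the unit sphere, then there is a uniformly continuous
selection `f : B_X → Y` of `Q` on the closed unit ball. -/
theorem uniformly_continuous_selection_of_quotient
    {X Y : Type*} [NormedAddCommGroup X] [NormedSpace ℝ X] [CompleteSpace X]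
    [NormedAddCommGroup Y] [NormedSpace ℝ Y] [CompleteSpace Y]
    (Q : Y →L[ℝ] X) (hQ : Function.Surjective Q)
    (lam : ℝ) (hlam₀ : 0 < lam) (hlam₁ : lam < 1)
    (φ : Metric.sphere (0 : X) 1 → Y) (hφ : UniformContinuous φ)
    (hφQ : ∀ x : Metric.sphere (0 : X) 1, ‖Q (φ x) - (x : X)‖ ≤ lam) :
    ∃ f : Metric.closedBall (0 : X) 1 → Y,
      UniformContinuous f ∧ ∀ x : Metric.closedBall (0 : X) 1, Q (f x) = (x : X) :=
  uniformly_continuous_selection_of_quotient_general Q lam hlam₀ hlam₁ φ hφ hφQ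
end

section
/- Equip G_k(ℕ) (increasing k-tuples of positive integers) with the interlacing graph metric δ, where distinct tuples n, m are adjacent iff m₁ ≤ n₁ ≤ m₂ ≤ n₂ ≤ … ≤ m_k ≤ n_k or n₁ ≤ m₁ ≤ … ≤ n_k ≤ m_k, and δ is the least path metric. Then for every n, m ∈ G_k(ℕ) one has δ(n, m) ≤ k, i.e. G_k(ℕ) has diameter at most k. -/
/-!
Let `x = n ⊔ m` pointwise. Taking pointwise minima of `x` with `n` shifted `t` places to the
left gives tuples that move, one interlacing step per unit of `t`, from `n` (at `t = 0`) up to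
`x` (once every `m i` lies below `n (i + t)`); likewise for `m`. If `u` is the least shift with
`m i ≤ n (i + u)`, a violation at shift `u - 1` forces `n i ≤ m (i + (k - u))`, so the two
ladders reach `x` after `u` and `k - u` steps respectively, and together form a path of
length `k`.
-/

/-- `G_k(ℕ)`: strictly increasing `k`-tuples of natural numbers. -/
def Gk (k : ℕ) := {n : Fin k → ℕ // StrictMono n}

/-- `m` interlaces `n` from below: `m₁ ≤ n₁ ≤ m₂ ≤ n₂ ≤ … ≤ m_k ≤ n_k`. -/
def Interlace {k : ℕ} (m n : Gk k) : Prop :=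
  (∀ i : Fin k, m.1 i ≤ n.1 i) ∧
  ∀ i : Fin k, ∀ h : (i : ℕ) + 1 < k, n.1 i ≤ m.1 ⟨(i : ℕ) + 1, h⟩

/-- Adjacency in the interlacing graph on `G_k(ℕ)`. -/
def InterlaceAdj {k : ℕ} (m n : Gk k) : Prop :=
  m ≠ n ∧ (Interlace m n ∨ Interlace n m)

namespace Gk

variable {k : ℕ}

def sup (n m : Gk k) : Gk k :=
  ⟨fun i => max (n.1 i) (m.1 i), fun _ _ h => max_lt_max (n.2 h) (m.2 h)⟩

/-- `i ↦ min (x i) (y (i + t))`, where `y (i + t)` is read as `∞` once `i + t ≥ k`. -/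
def shiftMin (x y : Gk k) (t : ℕ) : Gk k :=
  ⟨fun i => if h : (i : ℕ) + t < k then min (x.1 i) (y.1 ⟨i + t, h⟩) else x.1 i, by
    intro i j hij
    have hij' : (i : ℕ) < j := hij
    dsimp only
    split_ifs with hi hj hj
    · exact min_lt_min (x.2 hij) (y.2 (Fin.mk_lt_mk.2 (by omega)))
    · exact (min_le_left _ _).trans_lt (x.2 hij)
    · omega
    · exact x.2 hij⟩

def ShiftLe (m n : Fin k → ℕ) (t : ℕ) : Prop :=
  ∀ i : Fin k, ∀ h : (i : ℕ) + t < k, m i ≤ n ⟨i + t, h⟩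

theorem shiftLe_self (y : Gk k) (t : ℕ) : ShiftLe y.1 y.1 t :=
  fun _ _ => y.2.monotone (Fin.mk_le_mk.2 (by simp))

theorem shiftLe_sup {n m : Gk k} {y : Fin k → ℕ} {t : ℕ} (hn : ShiftLe n.1 y t)
    (hm : ShiftLe m.1 y t) : ShiftLe (sup n m).1 y t :=
  fun i h => max_le (hn i h) (hm i h)

theorem shiftMin_zero {x y : Gk k} (h : ∀ i, y.1 i ≤ x.1 i) : shiftMin x y 0 = y :=
  Subtype.ext <| funext fun i => by simp [shiftMin, h i]

theorem shiftMin_eq_self {x y : Gk k} {t : ℕ} (h : ShiftLe x.1 y.1 t) : shiftMin x y t = x := by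
  refine Subtype.ext <| funext fun i => ?_
  simp only [shiftMin]
  split_ifs with hi
  · exact min_eq_left (h i hi)
  · rfl

theorem interlace_shiftMin_succ (x y : Gk k) (t : ℕ) :
    Interlace (shiftMin x y t) (shiftMin x y (t + 1)) := by
  constructor
  · intro i
    simp only [shiftMin]
    split_ifs with h₀ h₁ h₁
    · exact min_le_min_left _ (y.2.monotone (Fin.mk_le_mk.2 (by omega)))
    · exact min_le_left _ _
    · omega
    · exact le_rfl
  · intro i hi
    simp only [shiftMin]
    split_ifs with h₁ h₀ h₀
    · exact min_le_min (x.2.monotone (Fin.mk_le_mk.2 (by omega)))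
        (y.2.monotone (Fin.mk_le_mk.2 (by omega)))
    · omega
    · omega
    · exact x.2.monotone (Fin.mk_le_mk.2 (by omega))

theorem exists_shiftLe_and_shiftLe_sub {n m : Fin k → ℕ} (hn : Monotone n) (hm : Monotone m) :
    ∃ u ≤ k, ShiftLe m n u ∧ ShiftLe n m (k - u) := by
  classical
  have hex : ∃ u, ShiftLe m n u := ⟨k, fun _ h => absurd h (by omega)⟩
  refine ⟨Nat.find hex, Nat.find_le fun _ h => absurd h (by omega), Nat.find_spec hex, ?_⟩
  intro i hi
  have hmin : ¬ ShiftLe m n (Nat.find hex - 1) := Nat.find_min hex (by omega)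
  simp only [ShiftLe, not_forall, not_le] at hmin
  obtain ⟨j, hj, hlt⟩ := hmin
  calc n i ≤ n ⟨j + (Nat.find hex - 1), hj⟩ := hn (Fin.mk_le_mk.2 (by omega))
    _ ≤ m j := hlt.le
    _ ≤ m ⟨i + (k - Nat.find hex), hi⟩ := hm (Fin.mk_le_mk.2 (by omega))

theorem eq_or_interlaceAdj_of_interlace {a b : Gk k} (h : Interlace a b ∨ Interlace b a) :
    a = b ∨ InterlaceAdj a b :=
  or_iff_not_imp_left.2 fun hab => ⟨hab, h⟩

end Gk

open Gk

/-- In the interlacing graph metric (the least path metric) on `G_k(ℕ)`, any two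
vertices are at distance at most `k`: any two tuples are joined by a path with at
most `k` edges (stationary steps allowed).  Hence `G_k(ℕ)` has diameter at most `k`. -/
theorem interlacing_graph_diameter_le (k : ℕ) (n m : Gk k) :
    ∃ p : ℕ → Gk k, p 0 = n ∧ p k = m ∧
      ∀ i < k, p i = p (i + 1) ∨ InterlaceAdj (p i) (p (i + 1)) := by
  obtain ⟨u, huk, hmn, hnm⟩ := exists_shiftLe_and_shiftLe_sub n.2.monotone m.2.monotone
  have hup : shiftMin (sup n m) n u = sup n m :=
    shiftMin_eq_self (shiftLe_sup (shiftLe_self n u) hmn)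
  have hdown : shiftMin (sup n m) m (k - u) = sup n m :=
    shiftMin_eq_self (shiftLe_sup hnm (shiftLe_self m _))
  let p : ℕ → Gk k := fun t =>
    if t < u then shiftMin (sup n m) n t else shiftMin (sup n m) m (k - t)
  have p_up : ∀ t ≤ u, p t = shiftMin (sup n m) n t := fun t ht => by
    rcases ht.lt_or_eq with ht | rfl
    · exact if_pos ht
    · exact (if_neg (lt_irrefl t)).trans (hdown.trans hup.symm)
  have p_down : ∀ t, u ≤ t → p t = shiftMin (sup n m) m (k - t) := fun t ht =>
    if_neg (by omega)
  refine ⟨p, ?_, ?_, fun t ht => eq_or_interlaceAdj_of_interlace ?_⟩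
  · rw [p_up 0 (Nat.zero_le u), shiftMin_zero fun i => le_max_left _ _]
  · rw [p_down k huk, Nat.sub_self, shiftMin_zero fun i => le_max_right _ _]
  · rcases lt_or_ge t u with htu | htu
    · rw [p_up t htu.le, p_up (t + 1) htu]
      exact Or.inl (interlace_shiftMin_succ _ _ t)
    · rw [p_down t htu, p_down (t + 1) (by omega), show k - t = k - (t + 1) + 1 by omega]
      exact Or.inr (interlace_shiftMin_succ _ _ _)
end
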